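/- arXiv:2401.00182 — 4 statements merged into one kernel-verified Lean document; each statement's English description precedes it below -/
import Mathlib

section
/- Let Γ be a linearly ordered abelian group and Δ a subgroup of Γ. Define the initial index ε(Γ|Δ) as the cardinality of the set of γ ∈ Γ with 0 ≤ γ and γ < δ for every positive δ ∈ Δ. If Δ has finite index e in Γ, then ε(Γ|Δ) ≤ e. -/
/-! Two elements of `[0, Δ_{>0})` that are congruent modulo `Δ` coincide: if they differed, the
larger minus the smaller would be a positive element of `Δ` not exceeding the larger one.
Hence reduction modulo `Δ` embeds this interval into `Γ ⧸ Δ`. -/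

namespace AddSubgroup

variable {Γ : Type*} [AddCommGroup Γ] [LinearOrder Γ] [IsOrderedAddMonoid Γ] (Δ : AddSubgroup Γ)

theorem le_of_sub_mem_of_lt_pos {a b : Γ} (hb : 0 ≤ b) (ha : ∀ δ ∈ Δ, 0 < δ → a < δ)
    (hab : a - b ∈ Δ) : a ≤ b := by
  by_contra! hba
  have : a < a - b := ha _ hab (sub_pos.mpr hba)
  exact this.not_ge (sub_le_self a hb)

theorem injOn_mk_initialSegment :
    Set.InjOn (QuotientAddGroup.mk : Γ → Γ ⧸ Δ) {γ : Γ | 0 ≤ γ ∧ ∀ δ ∈ Δ, 0 < δ → γ < δ} := by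
  rintro a ⟨ha0, ha⟩ b ⟨hb0, hb⟩ h
  have hab : a - b ∈ Δ := (QuotientAddGroup.eq_iff_sub_mem).mp h
  have hba : b - a ∈ Δ := by simpa using Δ.neg_mem hab
  exact le_antisymm (Δ.le_of_sub_mem_of_lt_pos hb0 ha hab) (Δ.le_of_sub_mem_of_lt_pos ha0 hb hba)

end AddSubgroup

/-- **Initial index is at most the index.**
For a linearly ordered abelian group `Γ` and a subgroup `Δ` of finite index `e`,
the initial index `ε(Γ|Δ) = |{γ ∈ Γ | 0 ≤ γ < Δ_{>0}}|` satisfies `ε(Γ|Δ) ≤ e`. -/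
theorem initial_index_le_index {Γ : Type*} [AddCommGroup Γ] [LinearOrder Γ] [IsOrderedAddMonoid Γ]
    (Δ : AddSubgroup Γ) (e : ℕ) (he : Δ.index = e) (hfin : e ≠ 0) :
    Nat.card {γ : Γ | 0 ≤ γ ∧ ∀ δ ∈ Δ, 0 < δ → γ < δ} ≤ e := by
  rw [← he, AddSubgroup.index_eq_card] at hfin ⊢
  have : Finite (Γ ⧸ Δ) := Nat.finite_of_card_ne_zero hfin
  exact Nat.card_le_card_of_injective _ (Δ.injOn_mk_initialSegment.injective)
end

section
/- Let Γ be a linearly ordered abelian group and Δ a subgroup of finite index e. If the initial index ε(Γ|Δ) equals e, then there exist γ₁, …, γ_e ∈ Γ with Γ = ⋃_{i=1}^e (γ_i + Δ), 0 = γ₁ < γ₂ < … < γ_e, and γ_e < δ for every positive δ ∈ Δ. -/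
/-!
The elements `γ` with `0 ≤ γ` and `γ < δ` for all positive `δ ∈ Δ` are pairwise incongruent
modulo `Δ`: if `a < b` were two of them with `b - a ∈ Δ`, then `b - a` would be a positive
element of `Δ` not exceeding `b`. So there are at most `[Γ:Δ]` of them, and when there are exactly
that many they represent every coset; listing them in increasing order gives the representatives,
the first of which is `0`.
-/

namespace AddSubgroup

variable {Γ : Type*} [AddCommGroup Γ] [LinearOrder Γ] (Δ : AddSubgroup Γ)

/-- The set whose cardinality is the initial index `ε(Γ|Δ)`. -/
def initialSegment : Set Γ := {γ : Γ | 0 ≤ γ ∧ ∀ δ ∈ Δ, 0 < δ → γ < δ}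

theorem zero_mem_initialSegment : (0 : Γ) ∈ Δ.initialSegment :=
  ⟨le_rfl, fun _ _ hδ => hδ⟩

theorem initialSegment_finite [Δ.FiniteIndex] (hε : Nat.card Δ.initialSegment = Δ.index) :
    Δ.initialSegment.Finite :=
  Set.finite_coe_iff.1 <| Nat.finite_of_card_ne_zero <| hε ▸ FiniteIndex.index_ne_zero

theorem not_lt_of_sub_mem_initialSegment [IsOrderedAddMonoid Γ] {a b : Γ}
    (ha : a ∈ Δ.initialSegment) (hb : b ∈ Δ.initialSegment) (hab : b - a ∈ Δ) : ¬a < b :=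
  fun hlt =>
  (hb.2 _ hab (sub_pos.2 hlt)).not_ge (sub_le_self b ha.1)

theorem injOn_mk_initialSegment_s2 [IsOrderedAddMonoid Γ] :
    Set.InjOn (QuotientAddGroup.mk : Γ → Γ ⧸ Δ) Δ.initialSegment := by
  intro a ha b hb hab
  have hba : b - a ∈ Δ := QuotientAddGroup.eq_iff_sub_mem.1 hab.symm
  have hab' : a - b ∈ Δ := QuotientAddGroup.eq_iff_sub_mem.1 hab
  exact le_antisymm (not_lt.1 (Δ.not_lt_of_sub_mem_initialSegment hb ha hab'))
    (not_lt.1 (Δ.not_lt_of_sub_mem_initialSegment ha hb hba))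

theorem exists_sub_mem_of_card_initialSegment_eq_index [IsOrderedAddMonoid Γ] [Δ.FiniteIndex]
    (hε : Nat.card Δ.initialSegment = Δ.index) (x : Γ) :
    ∃ s ∈ Δ.initialSegment, x - s ∈ Δ := by
  have hbij : Function.Bijective fun s : Δ.initialSegment => (s : Γ ⧸ Δ) :=
    (Nat.bijective_iff_injective_and_card _).2
      ⟨Δ.injOn_mk_initialSegment_s2.injective, hε.trans Δ.index_eq_card⟩
  obtain ⟨⟨s, hs⟩, hsx⟩ := hbij.2 x
  exact ⟨s, hs, QuotientAddGroup.eq_iff_sub_mem.1 hsx.symm⟩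

end AddSubgroup

/-- If the initial index `ε(Γ|Δ)` equals the (finite) index `e = [Γ:Δ]`, then there are
coset representatives `0 = γ₁ < γ₂ < … < γ_e` of `Δ` in `Γ`, all of them smaller than
every positive element of `Δ`. -/
theorem exists_coset_reps_of_initial_index_eq_index {Γ : Type*} [AddCommGroup Γ] [LinearOrder Γ]
    [IsOrderedAddMonoid Γ]
    (Δ : AddSubgroup Γ) (hfin : Δ.FiniteIndex)
    (hε : Nat.card {γ : Γ | 0 ≤ γ ∧ ∀ δ ∈ Δ, 0 < δ → γ < δ} = Δ.index) :
    ∃ γ : Fin Δ.index → Γ,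
      (∀ i : Fin Δ.index, (i : ℕ) = 0 → γ i = 0) ∧
      StrictMono γ ∧
      (∀ x : Γ, ∃ i, x - γ i ∈ Δ) ∧
      (∀ i, ∀ δ ∈ Δ, 0 < δ → γ i < δ) := by
  change Nat.card Δ.initialSegment = Δ.index at hε
  have hS := Δ.initialSegment_finite hε
  have hcard : hS.toFinset.card = Δ.index := by rwa [← Nat.card_eq_card_finite_toFinset]
  set γ := hS.toFinset.orderEmbOfFin hcard
  have hrange : Set.range γ = Δ.initialSegment := by simp [γ, Finset.range_orderEmbOfFin]
  have hγ (i) : γ i ∈ Δ.initialSegment := hrange ▸ Set.mem_range_self i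
  refine ⟨γ, fun i hi => ?_, γ.strictMono, fun x => ?_, fun i => (hγ i).2⟩
  · obtain ⟨j, hj⟩ := hrange ▸ Δ.zero_mem_initialSegment
    have hij : i ≤ j := Fin.le_iff_val_le_val.2 (hi ▸ j.val.zero_le)
    exact le_antisymm (hj ▸ γ.monotone hij) (hγ i).1
  · obtain ⟨s, hs, hxs⟩ := Δ.exists_sub_mem_of_card_initialSegment_eq_index hε x
    obtain ⟨i, rfl⟩ := hrange ▸ hs
    exact ⟨i, hxs⟩
end

section
/- Let μ be a valuation on K[x], fix an extension μ̄ of μ to K̄[x] for an algebraic closure K̄ of K, and for f ∈ K[x] nonconstant set ε(f) = max{μ̄(x − a) : a a root of f in K̄}. If Q is a key polynomial for μ (i.e. monic, and for all f with deg(f) < deg(Q) one has ε(f) < ε(Q)), then the truncation μ_Q is itself a valuation on K[x]. -/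
open Polynomial

/-- An (additive, Krull) valuation on a commutative ring `R`, with values in `WithTop Γ`
for a linearly ordered abelian group `Γ`.  (`⊤` plays the role of `∞`; elements of the
support may have value `∞`.) -/
structure AddVal (R : Type*) [CommRing R] (Γ : Type*) [AddCommGroup Γ] [LinearOrder Γ] [IsOrderedAddMonoid Γ] where
  v : R → WithTop Γ
  v_zero : v 0 = ⊤
  v_one : v 1 = 0
  v_mul : ∀ f g : R, v (f * g) = v f + v g
  v_add : ∀ f g : R, min (v f) (v g) ≤ v (f + g)

/-- `c 0, …, c r` is the `q`-expansion of `f`: all coefficients have degree smaller than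
`deg q` and `f = Σ_{ℓ=0}^r c ℓ * q^ℓ`. -/
def IsQExpansion {K : Type*} [Field K] (q f : Polynomial K) (r : ℕ)
    (c : ℕ → Polynomial K) : Prop :=
  (∀ ℓ, (c ℓ).degree < q.degree) ∧ f = ∑ ℓ ∈ Finset.range (r + 1), c ℓ * q ^ ℓ

/-- `w f` coincides with the truncation `w_q f`, i.e. with the minimum of the values of
the terms of the `q`-expansion of `f`. -/
def TruncEq {K Γ : Type*} [Field K] [AddCommGroup Γ] [LinearOrder Γ] [IsOrderedAddMonoid Γ]
    (w : Polynomial K → WithTop Γ) (q f : Polynomial K) : Prop :=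
  ∃ r c, IsQExpansion q f r c ∧
    w f = (Finset.range (r + 1)).inf fun ℓ => w (c ℓ * q ^ ℓ)

/-- A family `Q` of polynomials is a complete set for `w`: every nonzero `f` admits some
`Q i` of degree at most `deg f` with `w f = w_{Q i} f`. -/
def IsCompleteSet {K Γ I : Type*} [Field K] [AddCommGroup Γ] [LinearOrder Γ] [IsOrderedAddMonoid Γ]
    (w : Polynomial K → WithTop Γ) (Q : I → Polynomial K) : Prop :=
  ∀ f : Polynomial K, f ≠ 0 → ∃ i, (Q i).degree ≤ f.degree ∧ TruncEq w (Q i) f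

/-- The monomial `Q^λ = ∏ᵢ (Q i)^(λ i)` attached to a finitely supported multi-index. -/
noncomputable def Qpow {K I : Type*} [Field K] (Q : I → Polynomial K) (l : I →₀ ℕ) : Polynomial K :=
  l.prod fun i n => Q i ^ n

/-- The value group `vL` of a valued field `(L, v)`, as a subgroup of `Γ`. -/
def valueGroupL {L Γ : Type*} [Field L] [AddCommGroup Γ] [LinearOrder Γ] [IsOrderedAddMonoid Γ]
    (v : AddVal L Γ) : AddSubgroup Γ :=
  AddSubgroup.closure {γ : Γ | ∃ b : L, b ≠ 0 ∧ v.v b = (γ : WithTop Γ)}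

/-- The value group `vK` of the restriction of `v` to a subfield `K` of `L`,
as a subgroup of `Γ`. -/
def valueGroupK (K : Type*) {L Γ : Type*} [Field K] [Field L] [Algebra K L]
    [AddCommGroup Γ] [LinearOrder Γ] [IsOrderedAddMonoid Γ] (v : AddVal L Γ) : AddSubgroup Γ :=
  AddSubgroup.closure {γ : Γ | ∃ a : K, a ≠ 0 ∧ v.v (algebraMap K L a) = (γ : WithTop Γ)}

/-- The ramification index `e(L/K, v) = (vL : vK)`. -/
noncomputable def ramIndex (K : Type*) {L Γ : Type*} [Field K] [Field L] [Algebra K L]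
    [AddCommGroup Γ] [LinearOrder Γ] [IsOrderedAddMonoid Γ] (v : AddVal L Γ) : ℕ :=
  (valueGroupK K v).relIndex (valueGroupL v)

/-- The initial index `ε(L/K, v) = |{γ ∈ vL | 0 ≤ γ < (vK)_{>0}}|`. -/
noncomputable def initIndex (K : Type*) {L Γ : Type*} [Field K] [Field L] [Algebra K L]
    [AddCommGroup Γ] [LinearOrder Γ] [IsOrderedAddMonoid Γ] (v : AddVal L Γ) : ℕ :=
  Nat.card {γ : Γ | γ ∈ valueGroupL v ∧ 0 ≤ γ ∧ ∀ δ ∈ valueGroupK K v, 0 < δ → γ < δ}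

/-- `γ` is the value `ε(F) = max {μ̄(x - a) : a a root of F}` for a polynomial `F` over an
algebraically closed field, with respect to a valuation `μ̄` of `K̄[x]`. -/
def IsEpsVal {Kb Γ : Type*} [Field Kb] [AddCommGroup Γ] [LinearOrder Γ] [IsOrderedAddMonoid Γ]
    (μb : AddVal (Polynomial Kb) Γ) (F : Polynomial Kb) (γ : WithTop Γ) : Prop :=
  (∃ a : Kb, F.IsRoot a ∧ μb.v (Polynomial.X - Polynomial.C a) = γ) ∧
    ∀ a : Kb, F.IsRoot a → μb.v (Polynomial.X - Polynomial.C a) ≤ γ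

/-- `Q ∈ K[x]` is a key polynomial for the valuation `μ` of `K[x]` (whose extension to
`K̄[x]` is `μb`): `Q` is monic, nonconstant, and `deg f < deg Q` implies `ε(f) < ε(Q)`. -/
def IsKeyPoly {K Kb Γ : Type*} [Field K] [Field Kb] [Algebra K Kb]
    [AddCommGroup Γ] [LinearOrder Γ] [IsOrderedAddMonoid Γ]
    (μb : AddVal (Polynomial Kb) Γ) (Q : Polynomial K) : Prop :=
  Q.Monic ∧ 0 < Q.degree ∧
    ∀ f : Polynomial K, f.degree < Q.degree →
      ∀ γf γQ : WithTop Γ,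
        IsEpsVal μb (f.map (algebraMap K Kb)) γf →
        IsEpsVal μb (Q.map (algebraMap K Kb)) γQ → γf < γQ

/-!
Let `b` be a root of `Q` with `μ̄(x - b) = ε(Q) =: δ`, and let `ν` be the valuation of the disk
of radius `δ` around `b`, `ν(Σ aⱼ (x - b)ʲ) = min (μ̄(aⱼ) + j δ)`. If every root `a` of `F`
satisfies `μ̄(x - a) ≤ δ`, then `ν(x - a) = μ̄(x - a)` for each linear factor, so `ν(F) = μ̄(F)`;
this applies to `Q`, and by the key polynomial property to every `f` with `deg f < deg Q`, whose
roots even satisfy `μ̄(x - a) < δ`. The largest index at which the minimum defining `ν` is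
attained is additive, vanishes on these `f` and is positive on `Q`; hence the terms `f_ℓ Q^ℓ` of a
`Q`-expansion have pairwise distinct indices, no cancellation occurs, and
`ν(f) = min ν(f_ℓ Q^ℓ) = μ_Q(f)`. So `μ_Q` is the restriction of the valuation `ν` to `K[x]`.
-/

namespace AddVal

variable {R Γ : Type*} [CommRing R] [AddCommGroup Γ] [LinearOrder Γ] [IsOrderedAddMonoid Γ]

def toAddValuation (v : AddVal R Γ) : AddValuation R (WithTop Γ) :=
  AddValuation.of v.v v.v_zero v.v_one v.v_add v.v_mul

end AddVal

namespace AddValuation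

variable {R Γ₀ : Type*} [Ring R] [LinearOrderedAddCommMonoidWithTop Γ₀] (v : AddValuation R Γ₀)

theorem map_sum_eq_of_lt {ι : Type*} [DecidableEq ι] {s : Finset ι} {f : ι → R} {j : ι}
    (hj : j ∈ s) (hf : ∀ i ∈ s \ {j}, v (f j) < v (f i)) :
    v (∑ i ∈ s, f i) = v (f j) :=
  Valuation.map_sum_eq_of_lt v hj hf

theorem exists_map_le_map_sum {ι : Type*} {s : Finset ι} (hs : s.Nonempty) (f : ι → R) :
    ∃ i ∈ s, v (f i) ≤ v (∑ i ∈ s, f i) := by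
  obtain ⟨i, hi, heq⟩ := s.exists_mem_eq_inf hs fun i => v (f i)
  exact ⟨i, hi, heq ▸ v.map_le_sum fun j hj => Finset.inf_le hj⟩

end AddValuation

namespace Polynomial

section Gauss

open Finset.HasAntidiagonal

variable {L Γ : Type*} [Field L] [AddCommGroup Γ] [LinearOrder Γ] [IsOrderedAddMonoid Γ]
  (v : AddValuation L (WithTop Γ)) (δ : Γ)

def gaussTerm (P : L[X]) (j : ℕ) : WithTop Γ := v (P.coeff j) + ((j • δ : Γ) : WithTop Γ)

def gaussVal (P : L[X]) : WithTop Γ := (Finset.range (P.natDegree + 1)).inf (gaussTerm v δ P)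

-- the degree of the initial form of `P` in the graded ring of `gaussVal v δ`
def gaussIndex (P : L[X]) : ℕ :=
  Nat.findGreatest (fun j => gaussTerm v δ P j = gaussVal v δ P) P.natDegree

variable {v δ}

lemma gaussTerm_eq_top_of_natDegree_lt {P : L[X]} {j : ℕ} (h : P.natDegree < j) :
    gaussTerm v δ P j = ⊤ := by
  simp [gaussTerm, coeff_eq_zero_of_natDegree_lt h]

lemma gaussTerm_ne_top {P : L[X]} {j : ℕ} (h : P.coeff j ≠ 0) : gaussTerm v δ P j ≠ ⊤ :=
  WithTop.add_ne_top.mpr ⟨v.ne_top_iff.mpr h, WithTop.coe_ne_top⟩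

lemma gaussVal_le_gaussTerm (P : L[X]) (j : ℕ) : gaussVal v δ P ≤ gaussTerm v δ P j := by
  rcases le_or_gt j P.natDegree with h | h
  · exact Finset.inf_le (Finset.mem_range_succ_iff.mpr h)
  · simp [gaussTerm_eq_top_of_natDegree_lt h]

lemma gaussVal_ne_top {P : L[X]} (hP : P ≠ 0) : gaussVal v δ P ≠ ⊤ :=
  ne_top_of_le_ne_top (gaussTerm_ne_top (leadingCoeff_ne_zero.mpr hP)) (gaussVal_le_gaussTerm P _)

lemma gaussVal_zero : gaussVal v δ 0 = ⊤ := by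
  simp [gaussVal, gaussTerm]

lemma gaussVal_C (k : L) : gaussVal v δ (C k) = v k := by
  simp [gaussVal, gaussTerm]

lemma gaussIndex_C (k : L) : gaussIndex v δ (C k) = 0 := by
  simp [gaussIndex]

lemma gaussTerm_gaussIndex (P : L[X]) : gaussTerm v δ P (gaussIndex v δ P) = gaussVal v δ P := by
  obtain ⟨j, hj, hjeq⟩ := (Finset.range (P.natDegree + 1)).exists_mem_eq_inf
    Finset.nonempty_range_add_one (gaussTerm v δ P)
  exact Nat.findGreatest_spec (P := fun j => gaussTerm v δ P j = gaussVal v δ P)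
    (Finset.mem_range_succ_iff.mp hj) hjeq.symm

lemma gaussVal_lt_gaussTerm {P : L[X]} (hP : P ≠ 0) {j : ℕ} (hj : gaussIndex v δ P < j) :
    gaussVal v δ P < gaussTerm v δ P j := by
  refine lt_of_le_of_ne (gaussVal_le_gaussTerm P j) fun heq => ?_
  rcases le_or_gt j P.natDegree with h | h
  · exact Nat.findGreatest_is_greatest hj h heq.symm
  · exact gaussVal_ne_top hP (heq.trans (gaussTerm_eq_top_of_natDegree_lt h))

lemma gaussIndex_eq_of_gaussTerm_eq {P : L[X]} (hP : P ≠ 0) {m : ℕ}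
    (hm : gaussTerm v δ P m = gaussVal v δ P)
    (hlt : ∀ j, m < j → gaussVal v δ P < gaussTerm v δ P j) : gaussIndex v δ P = m := by
  by_contra hne
  rcases lt_or_gt_of_ne hne with h | h
  · exact (gaussVal_lt_gaussTerm hP h).ne' hm
  · exact (hlt _ h).ne' (gaussTerm_gaussIndex P)

lemma min_le_gaussVal_add (P P' : L[X]) :
    min (gaussVal v δ P) (gaussVal v δ P') ≤ gaussVal v δ (P + P') := by
  refine Finset.le_inf fun j _ => ?_
  calc min (gaussVal v δ P) (gaussVal v δ P')
      ≤ min (gaussTerm v δ P j) (gaussTerm v δ P' j) :=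
        min_le_min (gaussVal_le_gaussTerm P j) (gaussVal_le_gaussTerm P' j)
    _ ≤ gaussTerm v δ (P + P') j := by
        rw [gaussTerm, gaussTerm, gaussTerm, min_add_add_right, coeff_add]
        exact add_le_add_left (v.map_add _ _) _

lemma gaussTerm_add_gaussTerm (P P' : L[X]) (i k : ℕ) :
    gaussTerm v δ P i + gaussTerm v δ P' k =
      v (P.coeff i * P'.coeff k) + (((i + k) • δ : Γ) : WithTop Γ) := by
  rw [gaussTerm, gaussTerm, v.map_mul, add_nsmul, WithTop.coe_add, add_add_add_comm]

lemma gaussVal_add_gaussVal_lt {P P' : L[X]} (hP : P ≠ 0) (hP' : P' ≠ 0) {i k : ℕ}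
    (h : gaussIndex v δ P < i ∨ gaussIndex v δ P' < k) :
    gaussVal v δ P + gaussVal v δ P' < gaussTerm v δ P i + gaussTerm v δ P' k := by
  rcases h with h | h
  · exact WithTop.add_lt_add_of_lt_of_le (gaussVal_ne_top hP') (gaussVal_lt_gaussTerm hP h)
      (gaussVal_le_gaussTerm P' k)
  · exact WithTop.add_lt_add_of_le_of_lt (gaussVal_ne_top hP) (gaussVal_le_gaussTerm P i)
      (gaussVal_lt_gaussTerm hP' h)

lemma exists_gaussTerm_add_gaussTerm_le (P P' : L[X]) (n : ℕ) :
    ∃ i k, i + k = n ∧ gaussTerm v δ P i + gaussTerm v δ P' k ≤ gaussTerm v δ (P * P') n := by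
  obtain ⟨x, hx, hle⟩ := v.exists_map_le_map_sum
    (⟨(0, n), by simp⟩ : (antidiagonal n).Nonempty) fun x => P.coeff x.1 * P'.coeff x.2
  refine ⟨x.1, x.2, mem_antidiagonal.mp hx, ?_⟩
  rw [gaussTerm_add_gaussTerm, mem_antidiagonal.mp hx, gaussTerm, coeff_mul]
  exact add_le_add_left hle _

lemma gaussTerm_mul_gaussIndex_add {P P' : L[X]} (hP : P ≠ 0) (hP' : P' ≠ 0) :
    gaussTerm v δ (P * P') (gaussIndex v δ P + gaussIndex v δ P') =
      gaussVal v δ P + gaussVal v δ P' := by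
  classical
  set i := gaussIndex v δ P
  set k := gaussIndex v δ P'
  have hdom : ∀ x ∈ antidiagonal (i + k) \ {(i, k)},
      v (P.coeff i * P'.coeff k) < v (P.coeff x.1 * P'.coeff x.2) := by
    intro x hx
    obtain ⟨hsum, hne⟩ := Finset.mem_sdiff.mp hx
    have hsum := mem_antidiagonal.mp hsum
    have hlt : i < x.1 ∨ k < x.2 := by
      by_contra! h
      exact hne (Finset.mem_singleton.mpr (Prod.ext (by omega) (by omega)))
    have := gaussVal_add_gaussVal_lt hP hP' hlt
    rw [← gaussTerm_gaussIndex P, ← gaussTerm_gaussIndex P', gaussTerm_add_gaussTerm,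
      gaussTerm_add_gaussTerm, hsum] at this
    exact (WithTop.add_lt_add_iff_right WithTop.coe_ne_top).mp this
  rw [gaussTerm, coeff_mul, v.map_sum_eq_of_lt (by simp) hdom, ← gaussTerm_add_gaussTerm,
    gaussTerm_gaussIndex, gaussTerm_gaussIndex]

lemma gaussVal_mul (P P' : L[X]) : gaussVal v δ (P * P') = gaussVal v δ P + gaussVal v δ P' := by
  rcases eq_or_ne P 0 with rfl | hP
  · rw [zero_mul, gaussVal_zero, top_add]
  rcases eq_or_ne P' 0 with rfl | hP'
  · rw [mul_zero, gaussVal_zero, add_top]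
  refine le_antisymm ?_ (Finset.le_inf fun n _ => ?_)
  · exact (gaussVal_le_gaussTerm _ _).trans_eq (gaussTerm_mul_gaussIndex_add hP hP')
  · obtain ⟨i, k, -, hle⟩ := exists_gaussTerm_add_gaussTerm_le (v := v) (δ := δ) P P' n
    exact (add_le_add (gaussVal_le_gaussTerm P i) (gaussVal_le_gaussTerm P' k)).trans hle

lemma gaussIndex_mul {P P' : L[X]} (hP : P ≠ 0) (hP' : P' ≠ 0) :
    gaussIndex v δ (P * P') = gaussIndex v δ P + gaussIndex v δ P' := by
  refine gaussIndex_eq_of_gaussTerm_eq (mul_ne_zero hP hP') ?_ fun n hn => ?_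
  · rw [gaussTerm_mul_gaussIndex_add hP hP', gaussVal_mul]
  · obtain ⟨i, k, hik, hle⟩ := exists_gaussTerm_add_gaussTerm_le (v := v) (δ := δ) P P' n
    rw [gaussVal_mul]
    exact (gaussVal_add_gaussVal_lt hP hP' (by omega)).trans_le hle

lemma gaussIndex_pow {P : L[X]} (hP : P ≠ 0) (n : ℕ) :
    gaussIndex v δ (P ^ n) = n * gaussIndex v δ P := by
  induction n with
  | zero => simpa using gaussIndex_C (v := v) (δ := δ) 1
  | succ n ih => rw [pow_succ, gaussIndex_mul (pow_ne_zero n hP) hP, ih, Nat.succ_mul]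

variable (v δ) in
noncomputable def gaussValuation : AddValuation L[X] (WithTop Γ) :=
  AddValuation.of (gaussVal v δ) gaussVal_zero (by simpa using gaussVal_C (v := v) (δ := δ) 1)
    min_le_gaussVal_add gaussVal_mul

lemma gaussTerm_lt_gaussTerm_iff {P P' : L[X]} {j : ℕ} :
    gaussTerm v δ P j < gaussTerm v δ P' j ↔ v (P.coeff j) < v (P'.coeff j) :=
  WithTop.add_lt_add_iff_right WithTop.coe_ne_top

lemma gaussVal_sum_eq_inf {ι : Type*} (s : Finset ι) (P : ι → L[X])
    (hinj : Set.InjOn (fun i => gaussIndex v δ (P i)) {i | i ∈ s ∧ P i ≠ 0}) :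
    gaussVal v δ (∑ i ∈ s, P i) = s.inf fun i => gaussVal v δ (P i) := by
  classical
  set m := s.inf fun i => gaussVal v δ (P i)
  refine le_antisymm ?_ ((gaussValuation v δ).map_le_sum fun i hi => Finset.inf_le hi)
  rcases eq_or_ne m ⊤ with hm | hm
  · exact hm ▸ le_top
  have hs : s.Nonempty := Finset.nonempty_iff_ne_empty.mpr (by rintro rfl; exact hm rfl)
  set S := s.filter fun i => gaussVal v δ (P i) = m
  have hP0 : ∀ i ∈ S, P i ≠ 0 := by
    intro i hi h0
    exact hm (by rw [← (Finset.mem_filter.mp hi).2, h0, gaussVal_zero])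
  -- Among the summands of minimal value, take the one of largest index `j`: at degree `j`
  -- its coefficient dominates all others, so the sum has a term of value `m`.
  obtain ⟨i₀, hi₀S, hmax⟩ := S.exists_max_image (fun i => gaussIndex v δ (P i)) <| by
    obtain ⟨i, hi, heq⟩ := s.exists_mem_eq_inf hs fun i => gaussVal v δ (P i)
    exact ⟨i, Finset.mem_filter.mpr ⟨hi, heq.symm⟩⟩
  obtain ⟨hi₀s, hi₀m⟩ := Finset.mem_filter.mp hi₀S
  set j := gaussIndex v δ (P i₀)
  have hdom : ∀ i ∈ s \ {i₀}, v ((P i₀).coeff j) < v ((P i).coeff j) := by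
    intro i hi
    obtain ⟨his, hne⟩ := Finset.mem_sdiff.mp hi
    rw [← gaussTerm_lt_gaussTerm_iff, gaussTerm_gaussIndex, hi₀m]
    rcases (Finset.inf_le his : m ≤ gaussVal v δ (P i)).lt_or_eq with hlt | heq
    · exact hlt.trans_le (gaussVal_le_gaussTerm _ _)
    · have hiS : i ∈ S := Finset.mem_filter.mpr ⟨his, heq.symm⟩
      have hlt : gaussIndex v δ (P i) < j := (hmax i hiS).lt_of_ne fun h =>
        hne (Finset.mem_singleton.mpr (hinj ⟨his, hP0 i hiS⟩ ⟨hi₀s, hP0 i₀ hi₀S⟩ h))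
      exact heq.trans_lt (gaussVal_lt_gaussTerm (hP0 i hiS) hlt)
  calc gaussVal v δ (∑ i ∈ s, P i) ≤ gaussTerm v δ (∑ i ∈ s, P i) j := gaussVal_le_gaussTerm _ _
    _ = gaussTerm v δ (P i₀) j := by
      rw [gaussTerm, finsetSum_coeff, v.map_sum_eq_of_lt hi₀s hdom, gaussTerm]
    _ = m := by rw [gaussTerm_gaussIndex, hi₀m]

lemma gaussVal_X_add_C (c : L) : gaussVal v δ (X + C c) = min (v c) δ := by
  simp [gaussVal, gaussTerm, Finset.range_add_one, min_comm]

lemma gaussIndex_X_add_C (c : L) :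
    gaussIndex v δ (X + C c) = if (δ : WithTop Γ) ≤ v c then 1 else 0 := by
  simp [gaussIndex, Nat.findGreatest_succ, gaussVal_X_add_C, gaussTerm]

end Gauss

section Disk

variable {L Γ : Type*} [Field L] [AddCommGroup Γ] [LinearOrder Γ] [IsOrderedAddMonoid Γ]
  (v : AddValuation L (WithTop Γ)) (b : L) (δ : Γ)

-- `min (v aⱼ + j δ)` over the expansion `Σ aⱼ (X - b)ʲ` of a polynomial around `b`
noncomputable def diskValuation : AddValuation L[X] (WithTop Γ) :=
  (gaussValuation v δ).comap (taylorAlgHom b : L[X] →+* L[X])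

noncomputable def diskIndex (F : L[X]) : ℕ := gaussIndex v δ (taylor b F)

variable {v b δ}

lemma diskValuation_apply (F : L[X]) : diskValuation v b δ F = gaussVal v δ (taylor b F) := rfl

lemma diskValuation_C (k : L) : diskValuation v b δ (C k) = v k := by
  rw [diskValuation_apply, taylor_C, gaussVal_C]

lemma diskIndex_C (k : L) : diskIndex v b δ (C k) = 0 := by
  rw [diskIndex, taylor_C, gaussIndex_C]

lemma diskIndex_mul {F F' : L[X]} (hF : F ≠ 0) (hF' : F' ≠ 0) :
    diskIndex v b δ (F * F') = diskIndex v b δ F + diskIndex v b δ F' := by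
  rw [diskIndex, taylor_mul, gaussIndex_mul (by simpa using hF) (by simpa using hF')]
  rfl

lemma diskIndex_pow {F : L[X]} (hF : F ≠ 0) (n : ℕ) :
    diskIndex v b δ (F ^ n) = n * diskIndex v b δ F := by
  rw [diskIndex, taylor_pow, gaussIndex_pow (by simpa using hF)]
  rfl

lemma diskValuation_sum_eq_inf {ι : Type*} (s : Finset ι) (F : ι → L[X])
    (hinj : Set.InjOn (fun i => diskIndex v b δ (F i)) {i | i ∈ s ∧ F i ≠ 0}) :
    diskValuation v b δ (∑ i ∈ s, F i) = s.inf fun i => diskValuation v b δ (F i) := by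
  rw [diskValuation_apply, map_sum]
  exact gaussVal_sum_eq_inf s _ fun i hi j hj h => hinj (by simpa using hi) (by simpa using hj) h

lemma taylor_X_sub_C (a : L) : taylor b (X - C a) = X + C (b - a) := by
  rw [map_sub, taylor_X, taylor_C, C_sub]
  ring

lemma diskValuation_X_sub_C (a : L) : diskValuation v b δ (X - C a) = min (v (b - a)) δ := by
  rw [diskValuation_apply, taylor_X_sub_C, gaussVal_X_add_C]

lemma diskIndex_X_sub_C (a : L) :
    diskIndex v b δ (X - C a) = if (δ : WithTop Γ) ≤ v (b - a) then 1 else 0 := by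
  rw [diskIndex, taylor_X_sub_C, gaussIndex_X_add_C]

end Disk

section DiskOfExtension

variable {L Γ : Type*} [Field L] [AddCommGroup Γ] [LinearOrder Γ] [IsOrderedAddMonoid Γ]
  (μ : AddValuation L[X] (WithTop Γ)) {b : L} {δ : Γ}

lemma diskValuation_X_sub_C_of_le (hδ : μ (X - C b) = δ) {a : L} (ha : μ (X - C a) ≤ δ) :
    diskValuation (μ.comap C) b δ (X - C a) = μ (X - C a) ∧
      diskIndex (μ.comap C) b δ (X - C a) = if μ (X - C a) = δ then 1 else 0 := by
  have hba : C (b - a) = (X - C a) - (X - C b) := by rw [C_sub]; ring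
  rw [diskValuation_X_sub_C, diskIndex_X_sub_C]
  change min (μ (C (b - a))) δ = _ ∧ (if (δ : WithTop Γ) ≤ μ (C (b - a)) then 1 else 0) = _
  rw [hba]
  rcases ha.lt_or_eq with hlt | heq
  · rw [μ.map_sub_eq_of_lt_left (hδ ▸ hlt)]
    simp [hlt.le, hlt.ne, not_le.mpr hlt]
  · have hle : (δ : WithTop Γ) ≤ μ ((X - C a) - (X - C b)) := by
      have := μ.map_sub (X - C a) (X - C b)
      rwa [heq, hδ, min_self] at this
    rw [min_eq_right hle, if_pos hle, if_pos heq, heq]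
    exact ⟨rfl, rfl⟩

lemma diskValuation_prod_X_sub_C (hδ : μ (X - C b) = δ) (M : Multiset L)
    (hM : ∀ a ∈ M, μ (X - C a) ≤ δ) :
    diskValuation (μ.comap C) b δ (M.map (X - C ·)).prod = μ (M.map (X - C ·)).prod ∧
      diskIndex (μ.comap C) b δ (M.map (X - C ·)).prod =
        Multiset.card (M.filter fun a => μ (X - C a) = δ) := by
  induction M using Multiset.induction with
  | empty => exact ⟨by simp, by simpa using diskIndex_C (v := μ.comap C) (b := b) (δ := δ) 1⟩
  | cons a M ih =>
    obtain ⟨hval, hidx⟩ := diskValuation_X_sub_C_of_le μ hδ (hM a (Multiset.mem_cons_self a M))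
    obtain ⟨ihval, ihidx⟩ := ih fun x hx => hM x (Multiset.mem_cons_of_mem hx)
    have hprod : (M.map (X - C ·)).prod ≠ 0 :=
      (monic_multiset_prod_of_monic _ _ fun a _ => monic_X_sub_C a).ne_zero
    rw [Multiset.map_cons, Multiset.prod_cons, AddValuation.map_mul, AddValuation.map_mul, hval,
      ihval, diskIndex_mul (X_sub_C_ne_zero a) hprod, hidx, ihidx, Multiset.filter_cons]
    split_ifs <;> simp [add_comm]

lemma diskValuation_eq_of_splits (hδ : μ (X - C b) = δ) {F : L[X]} (hF : F.Splits)
    (hroots : ∀ a ∈ F.roots, μ (X - C a) ≤ δ) :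
    diskValuation (μ.comap C) b δ F = μ F := by
  rw [hF.eq_prod_roots, AddValuation.map_mul, AddValuation.map_mul, diskValuation_C,
    (diskValuation_prod_X_sub_C μ hδ _ hroots).1]
  rfl

lemma diskIndex_eq_card_of_splits (hδ : μ (X - C b) = δ) {F : L[X]} (hF0 : F ≠ 0)
    (hF : F.Splits) (hroots : ∀ a ∈ F.roots, μ (X - C a) ≤ δ) :
    diskIndex (μ.comap C) b δ F = Multiset.card (F.roots.filter fun a => μ (X - C a) = δ) := by
  have hprod : (F.roots.map (X - C ·)).prod ≠ 0 :=
    (monic_multiset_prod_of_monic _ _ fun a _ => monic_X_sub_C a).ne_zero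
  nth_rw 1 [hF.eq_prod_roots]
  rw [diskIndex_mul (by simpa using hF0) hprod, diskIndex_C, zero_add,
    (diskValuation_prod_X_sub_C μ hδ _ hroots).2]

end DiskOfExtension

end Polynomial

theorem exists_isQExpansion {K : Type*} [Field K] {Q : K[X]} (hQ : Q.Monic) (hdeg : 0 < Q.degree)
    (f : K[X]) : ∃ r c, IsQExpansion Q f r c := by
  have hzero : (0 : K[X]).degree < Q.degree := by rw [degree_zero]; exact bot_le.trans_lt hdeg
  induction hn : f.natDegree using Nat.strong_induction_on generalizing f with
  | _ n ih =>
  by_cases hq : f /ₘ Q = 0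
  · refine ⟨0, fun ℓ => if ℓ = 0 then f else 0, fun ℓ => ?_, by simp⟩
    dsimp only
    split_ifs
    · exact (divByMonic_eq_zero_iff hQ).mp hq
    · exact hzero
  have hf : f ≠ 0 := by rintro rfl; exact hq (zero_divByMonic Q)
  obtain ⟨r, c, hc, hsum⟩ :=
    ih _ (hn ▸ natDegree_lt_natDegree hq (degree_divByMonic_lt f Q hf hdeg)) (f /ₘ Q) rfl
  refine ⟨r + 1, fun ℓ => if ℓ = 0 then f %ₘ Q else c (ℓ - 1), fun ℓ => ?_, ?_⟩
  · dsimp only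
    split_ifs
    · exact degree_modByMonic_lt f hQ
    · exact hc _
  · nth_rw 1 [← modByMonic_add_div f Q]
    rw [hsum, Finset.sum_range_succ' _ (r + 1), Finset.mul_sum]
    simp [pow_succ, mul_comm, mul_left_comm, add_comm]

section KeyPolynomial

variable {K Kb Γ : Type*} [Field K] [Field Kb] [Algebra K Kb]
  [AddCommGroup Γ] [LinearOrder Γ] [IsOrderedAddMonoid Γ]

theorem exists_isEpsVal_of_isRoot (μb : AddVal Kb[X] Γ) {F : Kb[X]} (hF : F ≠ 0) {a : Kb}
    (ha : F.IsRoot a) : ∃ b, F.IsRoot b ∧ IsEpsVal μb F (μb.v (X - C b)) := by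
  classical
  obtain ⟨b, hb, hmax⟩ := F.roots.toFinset.exists_max_image (fun a => μb.v (X - C a))
    ⟨a, by simpa [hF] using ha⟩
  have hb : F.IsRoot b := by simpa [hF] using hb
  exact ⟨b, hb, ⟨b, hb, rfl⟩, fun a ha => hmax a (by simpa [hF] using ha)⟩

namespace IsKeyPoly

variable {μb : AddVal Kb[X] Γ} {Q : K[X]} {γ : WithTop Γ}

theorem isEpsVal_ne_top (hkey : IsKeyPoly μb Q) (hQ : IsEpsVal μb (Q.map (algebraMap K Kb)) γ) :
    γ ≠ ⊤ := by
  rintro rfl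
  obtain ⟨b, -, hb⟩ := hQ.1
  have hzero : (0 : K[X]).degree < Q.degree := by rw [degree_zero]; exact bot_le.trans_lt hkey.2.1
  -- every point is a root of `0`, so `ε(0) = ⊤` as well
  exact lt_irrefl _ (hkey.2.2 0 hzero ⊤ ⊤ ⟨⟨b, by simp, hb⟩, fun _ _ => le_top⟩ hQ)

theorem val_X_sub_C_lt (hkey : IsKeyPoly μb Q) (hQ : IsEpsVal μb (Q.map (algebraMap K Kb)) γ)
    {f : K[X]} (hdeg : f.degree < Q.degree) {a : Kb} (ha : a ∈ (f.map (algebraMap K Kb)).roots) :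
    μb.v (X - C a) < γ := by
  obtain ⟨b, -, hb⟩ :=
    exists_isEpsVal_of_isRoot μb (ne_zero_of_mem_roots ha) (isRoot_of_mem_roots ha)
  exact (hb.2 a (isRoot_of_mem_roots ha)).trans_lt (hkey.2.2 f hdeg _ _ hb hQ)

variable [IsAlgClosed Kb] {b : Kb} {δ : Γ}

theorem diskValuation_map_mul_pow (hkey : IsKeyPoly μb Q)
    (hQ : IsEpsVal μb (Q.map (algebraMap K Kb)) δ) (hδ : μb.v (X - C b) = δ) {c : K[X]}
    (hc : c.degree < Q.degree) (ℓ : ℕ) :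
    diskValuation (μb.toAddValuation.comap C) b δ ((c * Q ^ ℓ).map (algebraMap K Kb)) =
      μb.v ((c * Q ^ ℓ).map (algebraMap K Kb)) := by
  have hcval := diskValuation_eq_of_splits μb.toAddValuation hδ (IsAlgClosed.splits _)
    fun a ha => (hkey.val_X_sub_C_lt hQ hc ha).le
  have hQval := diskValuation_eq_of_splits μb.toAddValuation hδ (IsAlgClosed.splits _)
    fun a ha => hQ.2 a (isRoot_of_mem_roots ha)
  change _ = μb.toAddValuation _
  simp only [Polynomial.map_mul, Polynomial.map_pow, AddValuation.map_mul, AddValuation.map_pow,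
    hcval, hQval]

theorem diskIndex_map_mul_pow (hkey : IsKeyPoly μb Q)
    (hQ : IsEpsVal μb (Q.map (algebraMap K Kb)) δ) (hδ : μb.v (X - C b) = δ) {c : K[X]}
    (hc0 : c ≠ 0) (hc : c.degree < Q.degree) (ℓ : ℕ) :
    diskIndex (μb.toAddValuation.comap C) b δ ((c * Q ^ ℓ).map (algebraMap K Kb)) =
      ℓ * diskIndex (μb.toAddValuation.comap C) b δ (Q.map (algebraMap K Kb)) := by
  have hQ0 : Q.map (algebraMap K Kb) ≠ 0 := Polynomial.map_ne_zero hkey.1.ne_zero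
  have hc0' : c.map (algebraMap K Kb) ≠ 0 := Polynomial.map_ne_zero hc0
  rw [Polynomial.map_mul, Polynomial.map_pow, diskIndex_mul hc0' (pow_ne_zero _ hQ0),
    diskIndex_pow hQ0, diskIndex_eq_card_of_splits μb.toAddValuation hδ hc0' (IsAlgClosed.splits _)
      fun a ha => (hkey.val_X_sub_C_lt hQ hc ha).le,
    Multiset.filter_eq_nil.mpr fun a ha =>
      show μb.toAddValuation (X - C a) ≠ δ from (hkey.val_X_sub_C_lt hQ hc ha).ne,
    Multiset.card_zero, zero_add]

theorem diskIndex_map_pos (hkey : IsKeyPoly μb Q) (hbQ : (Q.map (algebraMap K Kb)).IsRoot b)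
    (hQ : IsEpsVal μb (Q.map (algebraMap K Kb)) δ) (hδ : μb.v (X - C b) = δ) :
    0 < diskIndex (μb.toAddValuation.comap C) b δ (Q.map (algebraMap K Kb)) := by
  have hQ0 : Q.map (algebraMap K Kb) ≠ 0 := Polynomial.map_ne_zero hkey.1.ne_zero
  rw [diskIndex_eq_card_of_splits μb.toAddValuation hδ hQ0 (IsAlgClosed.splits _)
    fun a ha => hQ.2 a (isRoot_of_mem_roots ha)]
  exact Multiset.card_pos_iff_exists_mem.mpr
    ⟨b, Multiset.mem_filter.mpr ⟨(mem_roots hQ0).mpr hbQ, hδ⟩⟩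

theorem diskValuation_map_eq_inf {μ : AddVal K[X] Γ}
    (hext : ∀ f : K[X], μb.v (f.map (algebraMap K Kb)) = μ.v f) (hkey : IsKeyPoly μb Q)
    (hbQ : (Q.map (algebraMap K Kb)).IsRoot b) (hQ : IsEpsVal μb (Q.map (algebraMap K Kb)) δ)
    (hδ : μb.v (X - C b) = δ) {f : K[X]} {r : ℕ} {c : ℕ → K[X]} (hexp : IsQExpansion Q f r c) :
    diskValuation (μb.toAddValuation.comap C) b δ (f.map (algebraMap K Kb)) =
      (Finset.range (r + 1)).inf fun ℓ => μ.v (c ℓ * Q ^ ℓ) := by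
  have hpos := hkey.diskIndex_map_pos hbQ hQ hδ
  rw [hexp.2, Polynomial.map_sum, diskValuation_sum_eq_inf]
  · exact Finset.inf_congr rfl fun ℓ _ =>
      (hkey.diskValuation_map_mul_pow hQ hδ (hexp.1 ℓ) ℓ).trans (hext _)
  rintro i ⟨-, hi⟩ j ⟨-, hj⟩ hij
  have hci : c i ≠ 0 := by rintro h; simp [h] at hi
  have hcj : c j ≠ 0 := by rintro h; simp [h] at hj
  simp only [hkey.diskIndex_map_mul_pow hQ hδ hci (hexp.1 i),
    hkey.diskIndex_map_mul_pow hQ hδ hcj (hexp.1 j)] at hij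
  exact Nat.eq_of_mul_eq_mul_right hpos hij

end IsKeyPoly

end KeyPolynomial

/-- **Truncation at a key polynomial is a valuation.**  Let `μ` be a valuation of `K[x]`,
`μb` an extension of `μ` to `K̄[x]`, and `Q` a key polynomial for `μ`.  If
`w : K[x] → Γ ∪ {∞}` is the truncation `μ_Q` (i.e. `w f` is the minimum of the values of
the terms of the `Q`-expansion of `f`), then `w` is itself a valuation of `K[x]`. -/
theorem truncation_isValuation_of_isKeyPoly
    {K Kb Γ : Type*} [Field K] [Field Kb] [Algebra K Kb] [IsAlgClosure K Kb]
    [AddCommGroup Γ] [LinearOrder Γ] [IsOrderedAddMonoid Γ]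
    (μ : AddVal (Polynomial K) Γ) (μb : AddVal (Polynomial Kb) Γ)
    (hext : ∀ f : Polynomial K, μb.v (f.map (algebraMap K Kb)) = μ.v f)
    (Q : Polynomial K) (hkey : IsKeyPoly μb Q)
    (w : Polynomial K → WithTop Γ)
    (hw : ∀ (f : Polynomial K) (r : ℕ) (c : ℕ → Polynomial K), IsQExpansion Q f r c →
      w f = (Finset.range (r + 1)).inf fun ℓ => μ.v (c ℓ * Q ^ ℓ)) :
    w 0 = ⊤ ∧ w 1 = 0 ∧ (∀ f g, w (f * g) = w f + w g) ∧
      (∀ f g, min (w f) (w g) ≤ w (f + g)) := by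
  have := IsAlgClosure.isAlgClosed K (K := Kb)
  have hQ0 : Q.map (algebraMap K Kb) ≠ 0 := Polynomial.map_ne_zero hkey.1.ne_zero
  obtain ⟨a, ha⟩ := IsAlgClosed.exists_root (Q.map (algebraMap K Kb)) <| by
    rw [degree_map]; exact hkey.2.1.ne'
  obtain ⟨b, hbQ, hQ⟩ := exists_isEpsVal_of_isRoot μb hQ0 ha
  obtain ⟨δ, hδ⟩ := WithTop.ne_top_iff_exists.mp (hkey.isEpsVal_ne_top hQ)
  rw [← hδ] at hQ
  set ν := (diskValuation (μb.toAddValuation.comap C) b δ).comap (mapRingHom (algebraMap K Kb))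
  have hwν : w = ν := funext fun f => by
    obtain ⟨r, c, hexp⟩ := exists_isQExpansion hkey.1 hkey.2.1 f
    exact (hw f r c hexp).trans (hkey.diskValuation_map_eq_inf hext hbQ hQ hδ.symm hexp).symm
  subst hwν
  exact ⟨ν.map_zero, ν.map_one, ν.map_mul, ν.map_add⟩
end

section
/- Let (L/K, v) be a valued field extension, η ∈ O_L, and g ∈ K[x] with g(η) = 0 and g = g(c) + ∂₁g(c)(x − c) + … + ∂_n g(c)(x − c)^n its Taylor expansion at some c ∈ K. If v(∂₁g(c)) + v(η − c) < v(∂_ℓ g(c)) + ℓ·v(η − c) for all 2 ≤ ℓ ≤ n, then letting b_ℓ = ∂_ℓ g(c)/∂₁ g(c) and h = 1 + b₂(η − c) + … + b_n(η − c)^{n−1}, one has v(h) = 0 and η − c = −g(c)/∂₁g(c) · h^{−1}; in particular v(η − c) = v(g(c)) − v(∂₁ g(c)). -/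
open Polynomial

/-! Write `u = η - c` and `a ℓ = ∂_ℓ g(c)`. Taylor's formula turns `g(η) = 0` into
`a 0 + a 1 u (1 + Σ_{ℓ ≥ 2} (a ℓ / a 1) u^(ℓ-1)) = 0`. The dominance hypothesis says exactly that
every term `(a ℓ / a 1) u^(ℓ-1)` of the correction factor has positive value, so the factor is a
unit of value `0`, and the two remaining claims are read off from `a 1 · u · h = -a 0`. -/

namespace AddVal

variable {R Γ : Type*} [CommRing R] [AddCommGroup Γ] [LinearOrder Γ] [IsOrderedAddMonoid Γ]

@[simp]
theorem toAddValuation_apply (v : AddVal R Γ) (x : R) : v.toAddValuation x = v.v x := rfl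

end AddVal

namespace Polynomial

theorem aeval_eq_sum_hasseDeriv_eval_mul_pow {K L : Type*} [CommRing K] [CommRing L] [Algebra K L]
    (g : K[X]) (c : K) (η : L) :
    aeval η g = ∑ ℓ ∈ Finset.range (g.natDegree + 1),
      algebraMap K L ((hasseDeriv ℓ g).eval c) * (η - algebraMap K L c) ^ ℓ := by
  conv_lhs => rw [← sum_taylor_eq g c]
  rw [sum_over_range' (n := g.natDegree + 1) _ (by simp) (by rw [natDegree_taylor]; omega),
    map_sum]
  refine Finset.sum_congr rfl fun i _ => ?_
  simp [taylor_coeff]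

theorem one_le_natDegree_of_hasseDeriv_one_eval_ne_zero {K : Type*} [CommRing K] {g : K[X]}
    {c : K} (h : (hasseDeriv 1 g).eval c ≠ 0) : 1 ≤ g.natDegree := by
  by_contra! hg
  exact h (by rw [hasseDeriv_eq_zero_of_lt_natDegree g 1 hg, eval_zero])

end Polynomial

theorem Finset.sum_range_succ_eq_add_add_sum_Icc {M : Type*} [AddCommMonoid M] (f : ℕ → M)
    {n : ℕ} (hn : 1 ≤ n) :
    ∑ ℓ ∈ Finset.range (n + 1), f ℓ = f 0 + f 1 + ∑ ℓ ∈ Finset.Icc 2 n, f ℓ := by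
  have hsplit : Finset.range (n + 1) = insert 0 (insert 1 (Finset.Icc 2 n)) := by
    ext m; simp only [Finset.mem_range, Finset.mem_insert, Finset.mem_Icc]; omega
  rw [hsplit, Finset.sum_insert (by simp), Finset.sum_insert (by simp), add_assoc]

section DominantLinearTerm

variable {L Γ : Type*} [Field L] [AddCommGroup Γ] [LinearOrder Γ] [IsOrderedAddMonoid Γ]

theorem mul_one_add_sum_div_mul_pow (a : ℕ → L) (u : L) (n : ℕ) (ha1 : a 1 ≠ 0) :
    a 1 * u * (1 + ∑ ℓ ∈ Finset.Icc 2 n, a ℓ / a 1 * u ^ (ℓ - 1)) =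
      a 1 * u + ∑ ℓ ∈ Finset.Icc 2 n, a ℓ * u ^ ℓ := by
  rw [mul_add, mul_one, Finset.mul_sum]
  congr 1
  refine Finset.sum_congr rfl fun ℓ hℓ => ?_
  obtain ⟨k, rfl⟩ : ∃ k, ℓ = k + 1 := ⟨ℓ - 1, by grind⟩
  rw [Nat.add_sub_cancel]
  field_simp
  ring

namespace AddValuation

theorem pos_div_mul_pow_of_add_lt (w : AddValuation L (WithTop Γ)) {x y u : L} {ℓ : ℕ}
    (hℓ : 1 ≤ ℓ) (hx : x ≠ 0) (hlt : w x + w u < w y + ℓ • w u) :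
    0 < w (y / x * u ^ (ℓ - 1)) := by
  have hfactor : x * u * (y / x * u ^ (ℓ - 1)) = y * u ^ ℓ := by
    obtain ⟨k, rfl⟩ : ∃ k, ℓ = k + 1 := ⟨ℓ - 1, by omega⟩
    rw [Nat.add_sub_cancel]
    field_simp
    ring
  have hval : w y + ℓ • w u = w x + w u + w (y / x * u ^ (ℓ - 1)) := by
    rw [← map_pow, ← map_mul, ← hfactor, map_mul, map_mul]
  rw [hval, ← add_zero (w x + w u)] at hlt
  exact (WithTop.add_lt_add_iff_left hlt.ne_top).mp (by simpa using hlt)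

theorem dominant_linear_term_of_sum_eq_zero (w : AddValuation L (WithTop Γ)) (a : ℕ → L) (u : L) {n : ℕ}
    (hn : 1 ≤ n) (hroot : ∑ ℓ ∈ Finset.range (n + 1), a ℓ * u ^ ℓ = 0) (ha1 : a 1 ≠ 0)
    (hdom : ∀ ℓ ∈ Finset.Icc 2 n, w (a 1) + w u < w (a ℓ) + ℓ • w u) :
    let h := 1 + ∑ ℓ ∈ Finset.Icc 2 n, a ℓ / a 1 * u ^ (ℓ - 1)
    w h = 0 ∧ u = -(a 0 / a 1) * h⁻¹ ∧ w (a 1) + w u = w (a 0) := by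
  intro h
  have hfactor : a 1 * u * h = -a 0 := by
    rw [Finset.sum_range_succ_eq_add_add_sum_Icc _ hn, pow_zero, pow_one, mul_one] at hroot
    rw [mul_one_add_sum_div_mul_pow a u n ha1]
    linear_combination hroot
  have hsum : 0 < w (∑ ℓ ∈ Finset.Icc 2 n, a ℓ / a 1 * u ^ (ℓ - 1)) :=
    w.map_lt_sum' (WithTop.coe_lt_top 0) fun ℓ hℓ =>
      w.pos_div_mul_pow_of_add_lt (by grind) ha1 (hdom ℓ hℓ)
  have hh : w h = 0 := by
    rw [w.map_add_eq_of_lt_left (by rwa [map_one]), map_one]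
  have hh0 : h ≠ 0 := by
    rintro h0
    simp [h0] at hh
  refine ⟨hh, ?_, ?_⟩
  · field_simp
    linear_combination hfactor
  · simpa [hh] using congrArg w hfactor

end AddValuation

end DominantLinearTerm

theorem dominant_linear_term_general
    {K L Γ : Type*} [Field K] [Field L] [Algebra K L] [AddCommGroup Γ] [LinearOrder Γ] [IsOrderedAddMonoid Γ]
    (v : AddVal L Γ)
    (η : L)
    (g : Polynomial K) (hgη : Polynomial.aeval η g = 0)
    (c : K) (hc1 : (Polynomial.hasseDeriv 1 g).eval c ≠ 0)
    (hdom : ∀ ℓ : ℕ, 2 ≤ ℓ → ℓ ≤ g.natDegree →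
      v.v (algebraMap K L ((Polynomial.hasseDeriv 1 g).eval c)) +
          v.v (η - algebraMap K L c) <
        v.v (algebraMap K L ((Polynomial.hasseDeriv ℓ g).eval c)) +
          ℓ • v.v (η - algebraMap K L c)) :
    let h : L := 1 + ∑ ℓ ∈ Finset.Icc 2 g.natDegree,
      algebraMap K L ((Polynomial.hasseDeriv ℓ g).eval c /
        (Polynomial.hasseDeriv 1 g).eval c) * (η - algebraMap K L c) ^ (ℓ - 1)
    v.v h = 0 ∧
    η - algebraMap K L c =
      - algebraMap K L (g.eval c / (Polynomial.hasseDeriv 1 g).eval c) * h⁻¹ ∧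
    v.v (algebraMap K L ((Polynomial.hasseDeriv 1 g).eval c)) +
        v.v (η - algebraMap K L c) =
      v.v (algebraMap K L (g.eval c)) := by
  have key := v.toAddValuation.dominant_linear_term_of_sum_eq_zero
    (fun ℓ => algebraMap K L ((hasseDeriv ℓ g).eval c)) (η - algebraMap K L c)
    (one_le_natDegree_of_hasseDeriv_one_eval_ne_zero hc1)
    (by rw [← aeval_eq_sum_hasseDeriv_eval_mul_pow]; exact hgη)
    ((_root_.map_ne_zero _).mpr hc1)
    (fun ℓ hℓ => hdom ℓ (Finset.mem_Icc.mp hℓ).1 (Finset.mem_Icc.mp hℓ).2)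
  simpa only [map_div₀, hasseDeriv_zero, LinearMap.id_apply, AddVal.toAddValuation_apply]
    using key

/-- If `g(η) = 0` and the linear term of the Taylor expansion of `g` at `c` strictly
dominates (in value) all higher-order terms evaluated at `η`, then with
`b_ℓ = ∂_ℓ g(c)/∂₁ g(c)` and `h = 1 + Σ_{ℓ=2}^n b_ℓ (η - c)^{ℓ-1}` one has `v(h) = 0`,
`η - c = -(g(c)/∂₁g(c))·h⁻¹`, and in particular
`v(η - c) = v(g(c)) - v(∂₁ g(c))`. -/
theorem dominant_linear_term
    {K L Γ : Type*} [Field K] [Field L] [Algebra K L] [AddCommGroup Γ] [LinearOrder Γ] [IsOrderedAddMonoid Γ]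
    (v : AddVal L Γ) (hv : ∀ b : L, v.v b = ⊤ ↔ b = 0)
    (η : L) (hη : 0 ≤ v.v η)
    (g : Polynomial K) (hgη : Polynomial.aeval η g = 0)
    (c : K) (hc1 : (Polynomial.hasseDeriv 1 g).eval c ≠ 0)
    (hdom : ∀ ℓ : ℕ, 2 ≤ ℓ → ℓ ≤ g.natDegree →
      v.v (algebraMap K L ((Polynomial.hasseDeriv 1 g).eval c)) +
          v.v (η - algebraMap K L c) <
        v.v (algebraMap K L ((Polynomial.hasseDeriv ℓ g).eval c)) +
          ℓ • v.v (η - algebraMap K L c)) :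
    let h : L := 1 + ∑ ℓ ∈ Finset.Icc 2 g.natDegree,
      algebraMap K L ((Polynomial.hasseDeriv ℓ g).eval c /
        (Polynomial.hasseDeriv 1 g).eval c) * (η - algebraMap K L c) ^ (ℓ - 1)
    v.v h = 0 ∧
    η - algebraMap K L c =
      - algebraMap K L (g.eval c / (Polynomial.hasseDeriv 1 g).eval c) * h⁻¹ ∧
    v.v (algebraMap K L ((Polynomial.hasseDeriv 1 g).eval c)) +
        v.v (η - algebraMap K L c) =
      v.v (algebraMap K L (g.eval c)) :=
  dominant_linear_term_general v η g hgη c hc1 hdom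
end
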